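/- arXiv:2404.17712 — 3 statements merged into one kernel-verified Lean document; each statement's English description precedes it below -/
import Mathlib

section
/- The limit lim_{q→∞} e(I_q)/q^d exists, the limit lim_{q→∞} e_HK(I_q)/q^d exists, and lim_{q→∞} e(I_q)/q^d = d! · lim_{q→∞} e_HK(I_q)/q^d, where q ranges over the powers p^e of p as e → ∞. -/
open Filter IsLocalRing

/-- The `q`-th Frobenius power `I^{[q]}` of an ideal `I`: the ideal generated by
`{x^q : x ∈ I}`. -/
def frobPow {R : Type*} [CommRing R] (I : Ideal R) (q : ℕ) : Ideal R :=
  Ideal.span ((fun x => x ^ q) '' (I : Set R))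

/-- The length of an `R`-module `M`, as a real number (the supremum of lengths of chains of
submodules; `0` if infinite). -/
noncomputable def rlength (R M : Type*) [CommRing R] [AddCommGroup M] [Module R M] : ℝ :=
  (((Order.krullDim (Submodule R M)).unbotD 0).toNat : ℝ)

/-- `λ_R(R/I)` as a real number. -/
noncomputable def quotLen (R : Type*) [CommRing R] (I : Ideal R) : ℝ :=
  rlength R (R ⧸ I)

section AuxLemmas

variable {R : Type*} [CommRing R]

theorem quotLen_nonneg (J : Ideal R) : 0 ≤ quotLen R J := Nat.cast_nonneg _

theorem krullDim_quot_le {J J' : Ideal R} (h : J ≤ J') :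
    Order.krullDim (Submodule R (R ⧸ J')) ≤ Order.krullDim (Submodule R (R ⧸ J)) := by
  let f : (R ⧸ J) →ₗ[R] (R ⧸ J') :=
    Submodule.mapQ J J' LinearMap.id (by rw [Submodule.comap_id]; exact h)
  have hf : Function.Surjective f := by
    intro x
    obtain ⟨r, rfl⟩ := Submodule.Quotient.mk_surjective _ x
    exact ⟨Submodule.Quotient.mk r, Submodule.mapQ_apply J J' LinearMap.id r⟩
  exact Order.krullDim_le_of_strictMono (Submodule.comap f)
    (Monotone.strictMono_of_injective (fun _ _ hle => Submodule.comap_mono hle)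
      (Submodule.comap_injective_of_surjective hf))

theorem quotLen_eq_zero {J : Ideal R} (h : Order.krullDim (Submodule R (R ⧸ J)) = ⊤) :
    quotLen R J = 0 := by
  rw [quotLen, rlength, h,
    show ((⊤ : WithBot ℕ∞).unbotD 0) = ⊤ from rfl, ENat.toNat_top, Nat.cast_zero]

theorem quotLen_anti {J J' : Ideal R} (h : J ≤ J')
    (hfin : Order.krullDim (Submodule R (R ⧸ J)) ≠ ⊤) : quotLen R J' ≤ quotLen R J := by
  have hk := krullDim_quot_le h
  rw [quotLen, quotLen, rlength, rlength]
  have h1 : (Order.krullDim (Submodule R (R ⧸ J'))).unbotD 0 ≤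
      (Order.krullDim (Submodule R (R ⧸ J))).unbotD 0 := by
    revert hk
    induction (Order.krullDim (Submodule R (R ⧸ J'))) using WithBot.recBotCoe with
    | bot => intro _; simp
    | coe x =>
      induction (Order.krullDim (Submodule R (R ⧸ J))) using WithBot.recBotCoe with
      | bot => intro hk; simp at hk
      | coe y => intro hk; simpa using hk
  have h2 : (Order.krullDim (Submodule R (R ⧸ J))).unbotD 0 ≠ ⊤ := by
    revert hfin
    induction (Order.krullDim (Submodule R (R ⧸ J))) using WithBot.recBotCoe with
    | bot => intro _; simp
    | coe x => intro hfin; simpa using hfin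
  exact_mod_cast ENat.toNat_le_toNat h1 h2

theorem frobPow_le_pow (K : Ideal R) (q : ℕ) : frobPow K q ≤ K ^ q := by
  rw [frobPow, Ideal.span_le]
  rintro y ⟨x, hx, rfl⟩
  exact Ideal.pow_mem_pow hx q

theorem frobPow_mono {K K' : Ideal R} (h : K ≤ K') (q : ℕ) : frobPow K q ≤ frobPow K' q :=
  Ideal.span_mono (Set.image_mono h)

theorem radical_frobPow (K : Ideal R) {q : ℕ} (hq : q ≠ 0) : (frobPow K q).radical = K.radical := by
  refine le_antisymm ?_ ?_
  · calc (frobPow K q).radical ≤ (K ^ q).radical := Ideal.radical_mono (frobPow_le_pow K q)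
      _ = K.radical := Ideal.radical_pow K hq
  · have h1 : K ≤ (frobPow K q).radical := fun x hx =>
      Ideal.mem_radical_iff.mpr ⟨q, Ideal.subset_span ⟨x, hx, rfl⟩⟩
    calc K.radical ≤ (frobPow K q).radical.radical := Ideal.radical_mono h1
      _ = (frobPow K q).radical := Ideal.radical_idem _

variable (p : ℕ)

theorem frobPow_eq_map [ExpChar R p] (K : Ideal R) (t : ℕ) :
    frobPow K (p ^ t) = K.map (iterateFrobenius R p t) := by
  have h1 : K.map (iterateFrobenius R p t) =
      Ideal.span ((⇑(iterateFrobenius R p t)) '' (K : Set R)) := rfl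
  rw [frobPow, h1]
  congr 1

theorem frobPow_pow (hp : p.Prime) [CharP R p] (K : Ideal R) (n t : ℕ) :
    frobPow (K ^ n) (p ^ t) = frobPow K (p ^ t) ^ n := by
  haveI := ExpChar.prime (R := R) hp
  rw [frobPow_eq_map p, frobPow_eq_map p, Ideal.map_pow]

theorem frobPow_frobPow (hp : p.Prime) [CharP R p] (K : Ideal R) (t : ℕ) :
    frobPow (frobPow K p) (p ^ t) = frobPow K (p ^ (t + 1)) := by
  haveI := ExpChar.prime (R := R) hp
  have h0 : frobPow K p = frobPow K (p ^ 1) := by rw [pow_one]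
  rw [h0, frobPow_eq_map p, frobPow_eq_map p, frobPow_eq_map p, Ideal.map_map]
  congr 1
  ext x
  show (iterateFrobenius R p t) ((iterateFrobenius R p 1) x) = (iterateFrobenius R p (t + 1)) x
  rw [iterateFrobenius_def, iterateFrobenius_def, iterateFrobenius_def, ← pow_mul]
  congr 1
  rw [pow_one, pow_succ]
  ring

theorem ideal_sum_le {ι : Type*} (s : Finset ι) (f : ι → Ideal R) (K : Ideal R)
    (h : ∀ i ∈ s, f i ≤ K) : (∑ i ∈ s, f i) ≤ K := by
  classical
  induction s using Finset.induction_on with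
  | empty => simpa using bot_le
  | @insert a s ha ih =>
    rw [Finset.sum_insert ha, Submodule.add_eq_sup]
    exact sup_le (h _ (Finset.mem_insert_self _ _))
      (ih fun i hi => h i (Finset.mem_insert_of_mem hi))

theorem span_pow_le_frob_pow {q : ℕ} (hq : 0 < q) (S : Finset R) :
    ∀ n : ℕ, Ideal.span (S : Set R) ^ ((n + S.card) * q) ≤
      Ideal.span ((fun x => x ^ q) '' (S : Set R)) ^ n := by
  classical
  induction S using Finset.induction_on with
  | empty =>
    intro n
    simp only [Finset.coe_empty, Ideal.span_empty, Finset.card_empty, Set.image_empty, add_zero]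
    rcases Nat.eq_zero_or_pos n with rfl | hn
    · simp
    · have hz : (⊥ : Ideal R) ^ (n * q) = ⊥ := by
        rw [← Ideal.zero_eq_bot, zero_pow (Nat.mul_ne_zero hn.ne' hq.ne')]
      rw [hz]
      exact bot_le
  | @insert x S' hxS ih =>
    intro n
    rw [Finset.coe_insert, Ideal.span_insert, ← Submodule.add_eq_sup,
      Finset.card_insert_of_notMem hxS]
    set T := Ideal.span ((fun z => z ^ q) '' (insert x (S' : Set R))) with hT
    have hxT : Ideal.span {x ^ q} ≤ T := by
      apply Ideal.span_mono
      intro y hy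
      rw [Set.mem_singleton_iff] at hy
      exact ⟨x, Set.mem_insert _ _, hy.symm⟩
    have hS'T : Ideal.span ((fun z => z ^ q) '' (S' : Set R)) ≤ T :=
      Ideal.span_mono (Set.image_mono (Set.subset_insert _ _))
    rw [add_pow]
    apply ideal_sum_le
    intro k hk
    rw [Finset.mem_range] at hk
    refine le_trans Ideal.mul_le_left ?_
    by_cases han : n ≤ k / q
    · refine le_trans Ideal.mul_le_left ?_
      have hnk : n * q ≤ k := le_trans (Nat.mul_le_mul_right q han) (Nat.div_mul_le_self k q)
      calc Ideal.span {x} ^ k = Ideal.span {x ^ k} := Ideal.span_singleton_pow x k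
        _ ≤ Ideal.span {x ^ (n * q)} := by
            rw [Ideal.span_singleton_le_span_singleton]
            exact pow_dvd_pow x hnk
        _ = Ideal.span {x ^ q} ^ n := by
            rw [Ideal.span_singleton_pow, ← pow_mul, mul_comm n q]
        _ ≤ T ^ n := Ideal.pow_right_mono hxT n
    · push_neg at han
      set a := k / q with haq
      set b := n - a with hb
      have hab : a + b = n := Nat.add_sub_cancel' han.le
      have hk1 : a * q ≤ k := Nat.div_mul_le_self k q
      have hk2 : k < (a + 1) * q := (Nat.div_lt_iff_lt_mul hq).mp (Nat.lt_succ_self a)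
      have hMk : (b + S'.card) * q ≤ (n + (S'.card + 1)) * q - k := by
        refine Nat.le_sub_of_add_le ?_
        have h5 : (b + S'.card) * q + k < (b + S'.card) * q + (a + 1) * q :=
          Nat.add_lt_add_left hk2 _
        have h6 : (b + S'.card) * q + (a + 1) * q = (n + (S'.card + 1)) * q := by
          rw [← Nat.add_mul]
          congr 1
          omega
        omega
      have hx1 : Ideal.span {x} ^ k ≤ T ^ a := by
        calc Ideal.span {x} ^ k = Ideal.span {x ^ k} := Ideal.span_singleton_pow x k
          _ ≤ Ideal.span {x ^ (a * q)} := by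
              rw [Ideal.span_singleton_le_span_singleton]
              exact pow_dvd_pow x hk1
          _ = Ideal.span {x ^ q} ^ a := by
              rw [Ideal.span_singleton_pow, ← pow_mul, mul_comm a q]
          _ ≤ T ^ a := Ideal.pow_right_mono hxT a
      have hx2 : Ideal.span (S' : Set R) ^ ((n + (S'.card + 1)) * q - k) ≤ T ^ b := by
        calc Ideal.span (S' : Set R) ^ ((n + (S'.card + 1)) * q - k)
            ≤ Ideal.span (S' : Set R) ^ ((b + S'.card) * q) := Ideal.pow_le_pow_right hMk
          _ ≤ Ideal.span ((fun z => z ^ q) '' (S' : Set R)) ^ b := ih b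
          _ ≤ T ^ b := Ideal.pow_right_mono hS'T b
      calc Ideal.span {x} ^ k * Ideal.span (S' : Set R) ^ ((n + (S'.card + 1)) * q - k)
          ≤ T ^ a * T ^ b := Ideal.mul_mono hx1 hx2
        _ = T ^ n := by rw [← pow_add, hab]

end AuxLemmas

theorem stmt3
    (R : Type*) [CommRing R] [IsNoetherianRing R] [IsLocalRing R]
    (p : ℕ) (hp : p.Prime) [CharP R p]
    [ExpChar (ResidueField R) p] [PerfectRing (ResidueField R) p]
    (d : ℕ) (hdim : ringKrullDim R = d)
    -- `dim N(R̂) < d`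
    (hnil : ringKrullDim ((AdicCompletion (maximalIdeal R) R) ⧸
        (nilradical (AdicCompletion (maximalIdeal R) R)).annihilator) < (d : WithBot ℕ∞))
    -- the Hilbert–Samuel multiplicity `e(K)` of an m-primary ideal `K`,
    -- characterized as the limit `lim_n d!·λ(R/K^n)/n^d`
    (eHS : Ideal R → ℝ)
    (heHS : ∀ K : Ideal R, K.radical = maximalIdeal R →
      Tendsto (fun n : ℕ => (d.factorial : ℝ) * quotLen R (K ^ n) / (n : ℝ) ^ d)
        atTop (nhds (eHS K)))
    -- the Hilbert–Kunz multiplicity `e_HK(K)` of an m-primary ideal `K`,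
    -- characterized as the limit `lim_e λ(R/K^{[p^e]})/p^{ed}`
    (eHK : Ideal R → ℝ)
    (heHK : ∀ K : Ideal R, K.radical = maximalIdeal R →
      Tendsto (fun e : ℕ => quotLen R (frobPow K (p ^ e)) / ((p : ℝ) ^ e) ^ d)
        atTop (nhds (eHK K)))
    -- the p-family of m-primary ideals, indexed by `e` with `q = p^e`
    (I : ℕ → Ideal R)
    (hIprim : ∀ e, (I e).radical = maximalIdeal R)
    (hIfam : ∀ e, frobPow (I e) p ≤ (I e) ^ p ∧ (I e) ^ p ≤ I (e + 1)) :
    ∃ A B : ℝ,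
      Tendsto (fun e : ℕ => eHS (I e) / ((p : ℝ) ^ e) ^ d) atTop (nhds A) ∧
      Tendsto (fun e : ℕ => eHK (I e) / ((p : ℝ) ^ e) ^ d) atTop (nhds B) ∧
      A = (d.factorial : ℝ) * B := by
  classical
  have hp1 : 1 < p := hp.one_lt
  have hpR1 : (1 : ℝ) < (p : ℝ) := by exact_mod_cast hp1
  have hpt : Tendsto (fun e : ℕ => p ^ e) atTop atTop :=
    tendsto_pow_atTop_atTop_of_one_lt hp1
  have hfac : (0 : ℝ) < (d.factorial : ℝ) := by exact_mod_cast d.factorial_pos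
  have hIlem : ∀ e, I e ≤ maximalIdeal R := fun e =>
    le_trans Ideal.le_radical (le_of_eq (hIprim e))
  have hpow_ne : ∀ t : ℕ, p ^ t ≠ 0 := fun t => pow_ne_zero t hp.pos.ne'
  by_cases Hfin : ∀ J : Ideal R, J.radical = maximalIdeal R →
      Order.krullDim (Submodule R (R ⧸ J)) ≠ ⊤
  · -- all m-primary ideals have finite length quotients
    have hql : ∀ {J J' : Ideal R}, J ≤ J' → J.radical = maximalIdeal R →
        quotLen R J' ≤ quotLen R J := fun h hJ => quotLen_anti h (Hfin _ hJ)
    have hrad_pow : ∀ {K : Ideal R}, K.radical = maximalIdeal R → ∀ {n : ℕ}, n ≠ 0 →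
        (K ^ n).radical = maximalIdeal R := by
      intro K hK n hn; rw [Ideal.radical_pow _ hn, hK]
    have hrad_frob : ∀ {K : Ideal R}, K.radical = maximalIdeal R → ∀ {q : ℕ}, q ≠ 0 →
        (frobPow K q).radical = maximalIdeal R := by
      intro K hK q hq; rw [radical_frobPow _ hq, hK]
    have hpdne : ((p : ℝ) ^ d) ≠ 0 := by positivity
    have hsplit1 : ∀ e : ℕ, ((p : ℝ) ^ (e + 1)) ^ d = (p : ℝ) ^ d * ((p : ℝ) ^ e) ^ d := by
      intro e; rw [pow_succ, mul_pow, mul_comm]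
    have hsplit2 : ∀ e s : ℕ, ((p : ℝ) ^ (e + s)) ^ d = ((p : ℝ) ^ e) ^ d * ((p : ℝ) ^ s) ^ d := by
      intro e s; rw [pow_add, mul_pow]
    -- nonnegativity of the multiplicities
    have heHS0 : ∀ K : Ideal R, K.radical = maximalIdeal R → 0 ≤ eHS K := by
      intro K hK
      refine ge_of_tendsto' (heHS K hK) fun n => ?_
      exact div_nonneg (mul_nonneg (Nat.cast_nonneg _) (quotLen_nonneg _)) (by positivity)
    have heHK0 : ∀ K : Ideal R, K.radical = maximalIdeal R → 0 ≤ eHK K := by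
      intro K hK
      refine ge_of_tendsto' (heHK K hK) fun n => ?_
      exact div_nonneg (quotLen_nonneg _) (by positivity)
    -- scaling of the Hilbert-Samuel multiplicity under powers
    have heHS_pow : ∀ K : Ideal R, K.radical = maximalIdeal R → ∀ n0 : ℕ, 0 < n0 →
        eHS (K ^ n0) = (n0 : ℝ) ^ d * eHS K := by
      intro K hK n0 hn0
      have hφ : Tendsto (fun s : ℕ => n0 * s) atTop atTop :=
        tendsto_atTop_mono (fun s => Nat.le_mul_of_pos_left s hn0) tendsto_id
      have h2 : Tendsto (fun s : ℕ =>
          (n0 : ℝ) ^ d * ((d.factorial : ℝ) * quotLen R (K ^ (n0 * s)) / ((n0 * s : ℕ) : ℝ) ^ d))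
          atTop (nhds ((n0 : ℝ) ^ d * eHS K)) := Tendsto.const_mul _ ((heHS K hK).comp hφ)
      refine tendsto_nhds_unique (heHS _ (hrad_pow hK hn0.ne')) ?_
      refine Tendsto.congr' ?_ h2
      filter_upwards [eventually_gt_atTop 0] with s hs
      have hs' : ((s : ℕ) : ℝ) ≠ 0 := Nat.cast_ne_zero.mpr hs.ne'
      have hn0' : ((n0 : ℕ) : ℝ) ≠ 0 := Nat.cast_ne_zero.mpr hn0.ne'
      rw [← pow_mul]
      push_cast
      rw [mul_pow]
      field_simp
    -- scaling of the Hilbert-Kunz multiplicity under the Frobenius power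
    have heHK_frob : ∀ K : Ideal R, K.radical = maximalIdeal R →
        eHK (frobPow K p) = (p : ℝ) ^ d * eHK K := by
      intro K hK
      have hr : (frobPow K p).radical = maximalIdeal R := hrad_frob hK hp.pos.ne'
      have h2 : Tendsto (fun e : ℕ =>
          (p : ℝ) ^ d * (quotLen R (frobPow K (p ^ (e + 1))) / ((p : ℝ) ^ (e + 1)) ^ d))
          atTop (nhds ((p : ℝ) ^ d * eHK K)) :=
        Tendsto.const_mul _ ((heHK K hK).comp (tendsto_add_atTop_nat 1))
      refine tendsto_nhds_unique (heHK _ hr) ?_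
      refine Tendsto.congr' ?_ h2
      filter_upwards with e
      rw [frobPow_frobPow p hp K e, hsplit1 e]
      rw [mul_div_assoc']
      rw [mul_div_mul_left _ _ hpdne]
    -- monotonicity
    have heHS_mono : ∀ K K' : Ideal R, K.radical = maximalIdeal R →
        K'.radical = maximalIdeal R → K ≤ K' → eHS K' ≤ eHS K := by
      intro K K' hK hK' hKK'
      refine le_of_tendsto_of_tendsto (heHS K' hK') (heHS K hK) ?_
      filter_upwards [eventually_gt_atTop 0] with n hn
      have h1 : quotLen R (K' ^ n) ≤ quotLen R (K ^ n) :=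
        hql (Ideal.pow_right_mono hKK' n) (hrad_pow hK hn.ne')
      gcongr
    have heHK_mono : ∀ K K' : Ideal R, K.radical = maximalIdeal R →
        K'.radical = maximalIdeal R → K ≤ K' → eHK K' ≤ eHK K := by
      intro K K' hK hK' hKK'
      refine le_of_tendsto_of_tendsto (heHK K' hK') (heHK K hK) ?_
      filter_upwards with e
      have h1 : quotLen R (frobPow K' (p ^ e)) ≤ quotLen R (frobPow K (p ^ e)) :=
        hql (frobPow_mono hKK' _) (hrad_frob hK (hpow_ne e))
      gcongr
    -- e(K) ≤ d! e_HK(K)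
    have hineq1 : ∀ K : Ideal R, K.radical = maximalIdeal R →
        eHS K ≤ (d.factorial : ℝ) * eHK K := by
      intro K hK
      have hL : Tendsto (fun e : ℕ =>
          (d.factorial : ℝ) * quotLen R (K ^ p ^ e) / ((p ^ e : ℕ) : ℝ) ^ d)
          atTop (nhds (eHS K)) := (heHS K hK).comp hpt
      have hR : Tendsto (fun e : ℕ =>
          (d.factorial : ℝ) * (quotLen R (frobPow K (p ^ e)) / ((p : ℝ) ^ e) ^ d))
          atTop (nhds ((d.factorial : ℝ) * eHK K)) := Tendsto.const_mul _ (heHK K hK)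
      refine le_of_tendsto_of_tendsto hL hR ?_
      filter_upwards with e
      have h1 : quotLen R (K ^ p ^ e) ≤ quotLen R (frobPow K (p ^ e)) :=
        hql (frobPow_le_pow K _) (hrad_frob hK (hpow_ne e))
      have hc : ((p ^ e : ℕ) : ℝ) = (p : ℝ) ^ e := by push_cast; ring
      rw [hc, mul_div_assoc]
      gcongr
    -- the key containments coming from a finite generating set
    have hcont : ∀ K : Ideal R, ∃ c : ℕ, ∀ n t : ℕ,
        K ^ ((n + c) * p ^ t) ≤ frobPow (K ^ n) (p ^ t) := by
      intro K
      obtain ⟨S, hSspan0⟩ := IsNoetherian.noetherian K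
      have hSspan : Ideal.span (S : Set R) = K := hSspan0
      refine ⟨S.card, fun n t => ?_⟩
      have h1 := span_pow_le_frob_pow (q := p ^ t) (Nat.pos_of_ne_zero (hpow_ne t)) S n
      rw [hSspan] at h1
      refine le_trans h1 ?_
      rw [frobPow_pow p hp K n t]
      refine Ideal.pow_right_mono ?_ n
      refine le_trans (Ideal.span_mono (Set.image_mono ?_)) (le_of_eq rfl)
      rw [← hSspan]
      exact Ideal.subset_span
    -- the key upper bound : e_HK(K^n) ≤ e(K) (n+c)^d / d!
    have hineq2 : ∀ K : Ideal R, K.radical = maximalIdeal R → ∀ c : ℕ,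
        (∀ n t : ℕ, K ^ ((n + c) * p ^ t) ≤ frobPow (K ^ n) (p ^ t)) →
        ∀ n : ℕ, 0 < n →
        eHK (K ^ n) ≤ eHS K * (((n + c : ℕ) : ℝ) ^ d / (d.factorial : ℝ)) := by
      intro K hK c hc n hn
      have hφ : Tendsto (fun t : ℕ => (n + c) * p ^ t) atTop atTop :=
        tendsto_atTop_mono (fun t => Nat.le_mul_of_pos_left _ (by omega)) hpt
      have hR : Tendsto (fun t : ℕ =>
          ((d.factorial : ℝ) * quotLen R (K ^ ((n + c) * p ^ t)) /
              (((n + c) * p ^ t : ℕ) : ℝ) ^ d) * (((n + c : ℕ) : ℝ) ^ d / (d.factorial : ℝ)))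
          atTop (nhds (eHS K * (((n + c : ℕ) : ℝ) ^ d / (d.factorial : ℝ)))) :=
        Tendsto.mul_const _ ((heHS K hK).comp hφ)
      refine le_of_tendsto_of_tendsto (heHK _ (hrad_pow hK hn.ne')) hR ?_
      filter_upwards with t
      have h1 : quotLen R (frobPow (K ^ n) (p ^ t)) ≤ quotLen R (K ^ ((n + c) * p ^ t)) :=
        hql (hc n t) (hrad_pow hK (Nat.mul_ne_zero (by omega) (hpow_ne t)))
      have hnc : (0 : ℝ) < ((n + c : ℕ) : ℝ) := by
        exact_mod_cast Nat.pos_of_ne_zero (by omega)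
      have heq : ((d.factorial : ℝ) * quotLen R (K ^ ((n + c) * p ^ t)) /
              (((n + c) * p ^ t : ℕ) : ℝ) ^ d) * (((n + c : ℕ) : ℝ) ^ d / (d.factorial : ℝ))
          = quotLen R (K ^ ((n + c) * p ^ t)) / ((p : ℝ) ^ t) ^ d := by
        have hc2 : (((n + c) * p ^ t : ℕ) : ℝ) = ((n + c : ℕ) : ℝ) * (p : ℝ) ^ t := by
          push_cast; ring
        rw [hc2, mul_pow]
        have h3 : ((n + c : ℕ) : ℝ) ^ d ≠ 0 := by positivity
        have h4 : ((p : ℝ) ^ t) ^ d ≠ 0 := by positivity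
        field_simp
      rw [heq]
      gcongr
    -- the family inequalities
    have hfam_pow : ∀ e s : ℕ, (I e) ^ p ^ s ≤ I (e + s) := by
      intro e s
      induction s with
      | zero => simpa using le_refl (I e)
      | succ s ih =>
        have h1 : (I e) ^ p ^ (s + 1) = ((I e) ^ p ^ s) ^ p := by
          rw [← pow_mul, pow_succ]
        rw [h1]
        calc ((I e) ^ p ^ s) ^ p ≤ (I (e + s)) ^ p := Ideal.pow_right_mono ih p
          _ ≤ I (e + s + 1) := (hIfam (e + s)).2
    -- the two sequences
    set a : ℕ → ℝ := fun e => eHS (I e) / ((p : ℝ) ^ e) ^ d with ha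
    set b : ℕ → ℝ := fun e => eHK (I e) / ((p : ℝ) ^ e) ^ d with hb
    have haanti : Antitone a := by
      refine antitone_nat_of_succ_le fun e => ?_
      have h1 : eHS (I (e + 1)) ≤ (p : ℝ) ^ d * eHS (I e) := by
        calc eHS (I (e + 1)) ≤ eHS ((I e) ^ p) :=
              heHS_mono _ _ (hrad_pow (hIprim e) hp.pos.ne') (hIprim (e + 1)) (hIfam e).2
          _ = (p : ℝ) ^ d * eHS (I e) := by
              rw [heHS_pow _ (hIprim e) p hp.pos]
      show eHS (I (e + 1)) / ((p : ℝ) ^ (e + 1)) ^ d ≤ eHS (I e) / ((p : ℝ) ^ e) ^ d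
      have h2 : eHS (I e) / ((p : ℝ) ^ e) ^ d
          = ((p : ℝ) ^ d * eHS (I e)) / ((p : ℝ) ^ d * ((p : ℝ) ^ e) ^ d) :=
        (mul_div_mul_left _ _ hpdne).symm
      rw [h2, hsplit1 e]
      gcongr
    have hbanti : Antitone b := by
      refine antitone_nat_of_succ_le fun e => ?_
      have h1 : eHK (I (e + 1)) ≤ (p : ℝ) ^ d * eHK (I e) := by
        calc eHK (I (e + 1)) ≤ eHK ((I e) ^ p) :=
              heHK_mono _ _ (hrad_pow (hIprim e) hp.pos.ne') (hIprim (e + 1)) (hIfam e).2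
          _ ≤ eHK (frobPow (I e) p) :=
              heHK_mono _ _ (hrad_frob (hIprim e) hp.pos.ne')
                (hrad_pow (hIprim e) hp.pos.ne') (hIfam e).1
          _ = (p : ℝ) ^ d * eHK (I e) := heHK_frob _ (hIprim e)
      show eHK (I (e + 1)) / ((p : ℝ) ^ (e + 1)) ^ d ≤ eHK (I e) / ((p : ℝ) ^ e) ^ d
      have h2 : eHK (I e) / ((p : ℝ) ^ e) ^ d
          = ((p : ℝ) ^ d * eHK (I e)) / ((p : ℝ) ^ d * ((p : ℝ) ^ e) ^ d) :=
        (mul_div_mul_left _ _ hpdne).symm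
      rw [h2, hsplit1 e]
      gcongr
    have habdd : BddBelow (Set.range a) := by
      refine ⟨0, ?_⟩
      rintro x ⟨e, rfl⟩
      exact div_nonneg (heHS0 _ (hIprim e)) (by positivity)
    have hbbdd : BddBelow (Set.range b) := by
      refine ⟨0, ?_⟩
      rintro x ⟨e, rfl⟩
      exact div_nonneg (heHK0 _ (hIprim e)) (by positivity)
    have hA : Tendsto a atTop (nhds (⨅ e, a e)) := tendsto_atTop_ciInf haanti habdd
    have hB : Tendsto b atTop (nhds (⨅ e, b e)) := tendsto_atTop_ciInf hbanti hbbdd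
    refine ⟨⨅ e, a e, ⨅ e, b e, hA, hB, le_antisymm ?_ ?_⟩
    · -- A ≤ d! B
      refine le_of_tendsto_of_tendsto hA (Tendsto.const_mul ((d.factorial : ℝ)) hB)
        (Eventually.of_forall fun e => ?_)
      show eHS (I e) / ((p : ℝ) ^ e) ^ d ≤ (d.factorial : ℝ) * (eHK (I e) / ((p : ℝ) ^ e) ^ d)
      rw [← mul_div_assoc]
      gcongr
      exact hineq1 _ (hIprim e)
    · -- d! B ≤ A
      refine ge_of_tendsto' hA fun e => ?_
      obtain ⟨c, hc⟩ := hcont (I e)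
      have hkey : ∀ s : ℕ, (⨅ e', b e') ≤
          (a e / (d.factorial : ℝ)) * (((p ^ s + c : ℕ) : ℝ) / (p : ℝ) ^ s) ^ d := by
        intro s
        have h1 : (⨅ e', b e') ≤ b (e + s) := ciInf_le hbbdd (e + s)
        have h2 : b (e + s) ≤ eHK ((I e) ^ p ^ s) / ((p : ℝ) ^ (e + s)) ^ d := by
          have hmono : eHK (I (e + s)) ≤ eHK ((I e) ^ p ^ s) :=
            heHK_mono _ _ (hrad_pow (hIprim e) (hpow_ne s)) (hIprim (e + s)) (hfam_pow e s)
          show eHK (I (e + s)) / ((p : ℝ) ^ (e + s)) ^ d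
              ≤ eHK ((I e) ^ p ^ s) / ((p : ℝ) ^ (e + s)) ^ d
          gcongr
        have h3 : eHK ((I e) ^ p ^ s) ≤
            eHS (I e) * (((p ^ s + c : ℕ) : ℝ) ^ d / (d.factorial : ℝ)) :=
          hineq2 (I e) (hIprim e) c hc (p ^ s) (Nat.pos_of_ne_zero (hpow_ne s))
        have h4 : eHK ((I e) ^ p ^ s) / ((p : ℝ) ^ (e + s)) ^ d
            ≤ (eHS (I e) * (((p ^ s + c : ℕ) : ℝ) ^ d / (d.factorial : ℝ)))
              / ((p : ℝ) ^ (e + s)) ^ d := by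
          gcongr
        have h5 : (eHS (I e) * (((p ^ s + c : ℕ) : ℝ) ^ d / (d.factorial : ℝ)))
              / ((p : ℝ) ^ (e + s)) ^ d
            = (a e / (d.factorial : ℝ)) * (((p ^ s + c : ℕ) : ℝ) / (p : ℝ) ^ s) ^ d := by
          show _ = (eHS (I e) / ((p : ℝ) ^ e) ^ d / (d.factorial : ℝ)) * _
          rw [hsplit2 e s, div_pow]
          have hx1 : ((p : ℝ) ^ e) ^ d ≠ 0 := by positivity
          have hx2 : ((p : ℝ) ^ s) ^ d ≠ 0 := by positivity
          rw [div_div, div_mul_div_comm, mul_div_assoc', div_div]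
          ring_nf
        exact le_trans h1 (le_trans h2 (le_trans h4 (le_of_eq h5)))
      have h6 : Tendsto (fun s : ℕ => ((p ^ s + c : ℕ) : ℝ) / (p : ℝ) ^ s) atTop (nhds 1) := by
        have h7 : Tendsto (fun s : ℕ => (c : ℝ) / (p : ℝ) ^ s) atTop (nhds 0) :=
          tendsto_const_nhds.div_atTop (tendsto_pow_atTop_atTop_of_one_lt hpR1)
        have h8 : Tendsto (fun s : ℕ => 1 + (c : ℝ) / (p : ℝ) ^ s) atTop (nhds 1) := by
          simpa using tendsto_const_nhds.add h7
        refine Tendsto.congr' (Eventually.of_forall fun s => ?_) h8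
        have hps : ((p : ℝ)) ^ s ≠ 0 := by positivity
        push_cast
        field_simp
      have hlim : Tendsto (fun s : ℕ =>
          (a e / (d.factorial : ℝ)) * (((p ^ s + c : ℕ) : ℝ) / (p : ℝ) ^ s) ^ d)
          atTop (nhds (a e / (d.factorial : ℝ))) := by
        have := Tendsto.const_mul (a e / (d.factorial : ℝ)) (h6.pow d)
        simpa using this
      have h9 : (⨅ e', b e') ≤ a e / (d.factorial : ℝ) := ge_of_tendsto' hlim hkey
      calc (d.factorial : ℝ) * (⨅ e', b e')
          ≤ (d.factorial : ℝ) * (a e / (d.factorial : ℝ)) := by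
            exact mul_le_mul_of_nonneg_left h9 hfac.le
        _ = a e := by field_simp

  · -- degenerate case: all relevant lengths are (coded as) zero
    push_neg at Hfin
    obtain ⟨J0, hJ0rad, hJ0top⟩ := Hfin
    obtain ⟨c0, hc0⟩ := Ideal.exists_radical_pow_le_of_fg J0
      (by rw [hJ0rad]; exact IsNoetherian.noetherian _)
    rw [hJ0rad] at hc0
    have hzero : ∀ J : Ideal R, J ≤ maximalIdeal R ^ c0 → quotLen R J = 0 := by
      intro J hJ
      have hd : Order.krullDim (Submodule R (R ⧸ J)) = ⊤ :=
        top_le_iff.mp (hJ0top ▸ krullDim_quot_le (le_trans hJ hc0))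
      exact quotLen_eq_zero hd
    have hS0 : ∀ e, eHS (I e) = 0 := by
      intro e
      refine tendsto_nhds_unique (heHS _ (hIprim e)) ?_
      refine Tendsto.congr' ?_ (tendsto_const_nhds (x := (0 : ℝ)))
      filter_upwards [eventually_ge_atTop c0] with n hn
      have h1 : (I e) ^ n ≤ maximalIdeal R ^ c0 :=
        le_trans (Ideal.pow_right_mono (hIlem e) n) (Ideal.pow_le_pow_right hn)
      rw [hzero _ h1]
      simp
    have hK0 : ∀ e, eHK (I e) = 0 := by
      intro e
      refine tendsto_nhds_unique (heHK _ (hIprim e)) ?_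
      refine Tendsto.congr' ?_ (tendsto_const_nhds (x := (0 : ℝ)))
      filter_upwards [hpt.eventually_ge_atTop c0] with t ht
      have h1 : frobPow (I e) (p ^ t) ≤ maximalIdeal R ^ c0 :=
        le_trans (frobPow_le_pow _ _) (le_trans (Ideal.pow_right_mono (hIlem e) _)
          (Ideal.pow_le_pow_right ht))
      rw [hzero _ h1]
      simp
    refine ⟨0, 0, ?_, ?_, by ring⟩
    · simpa [hS0] using tendsto_const_nhds (x := (0 : ℝ))
    · simpa [hK0] using tendsto_const_nhds (x := (0 : ℝ))
end

section
/- If A and B are cobounded C-convex regions, then their Minkowski sum A + B = {a + b : a ∈ A, b ∈ B} is a cobounded C-convex region; in particular, A + B is closed. -/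
open scoped Pointwise
open Set Filter Metric Bornology Topology

theorem add_closed_of_orthant {d : ℕ} (T : (Fin d → ℝ) ≃ₗ[ℝ] (Fin d → ℝ))
    (A B : Set (Fin d → ℝ)) (hAc : IsClosed A) (hBc : IsClosed B)
    (hAK : ∀ x ∈ A, ∀ i, 0 ≤ T x i) (hBK : ∀ x ∈ B, ∀ i, 0 ≤ T x i) :
    IsClosed (A + B) := by
  have hTc : Continuous T := (T.toLinearMap).continuous_of_finiteDimensional
  set S : (Fin d → ℝ) →L[ℝ] (Fin d → ℝ) := LinearMap.toContinuousLinearMap T.symm.toLinearMap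
  apply IsSeqClosed.isClosed
  intro u z hu hz
  choose a ha b hb hab using fun n => Set.mem_add.mp (hu n)
  -- bound on ‖T (u n)‖
  have hTu : Tendsto (fun n => ‖T (u n)‖) atTop (𝓝 ‖T z‖) :=
    ((hTc.tendsto z).comp hz).norm
  obtain ⟨M, hM⟩ := hTu.bddAbove_range
  have hM' : ∀ n, ‖T (u n)‖ ≤ M := fun n => hM ⟨n, rfl⟩
  have hMnn : 0 ≤ M := le_trans (norm_nonneg _) (hM' 0)
  have habound : ∀ n, ‖a n‖ ≤ ‖S‖ * M := by
    intro n
    have h1 : ‖T (a n)‖ ≤ M := by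
      rw [pi_norm_le_iff_of_nonneg hMnn]
      intro i
      have h2 : T (a n) i + T (b n) i = T (u n) i := by
        rw [← hab n, map_add]; rfl
      have h3 : |T (a n) i| = T (a n) i := abs_of_nonneg (hAK _ (ha n) i)
      calc ‖T (a n) i‖ = T (a n) i := h3
        _ ≤ T (a n) i + T (b n) i := le_add_of_nonneg_right (hBK _ (hb n) i)
        _ = T (u n) i := h2
        _ ≤ ‖T (u n) i‖ := by rw [Real.norm_eq_abs]; exact le_abs_self _
        _ ≤ ‖T (u n)‖ := norm_le_pi_norm _ i
        _ ≤ M := hM' n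
    calc ‖a n‖ = ‖S (T (a n))‖ := by simp [S]
      _ ≤ ‖S‖ * ‖T (a n)‖ := S.le_opNorm _
      _ ≤ ‖S‖ * M := by nlinarith [norm_nonneg S]
  obtain ⟨a₀, -, φ, hφ, hφa⟩ :=
    tendsto_subseq_of_bounded (isBounded_closedBall (x := (0 : Fin d → ℝ)) (r := ‖S‖ * M))
      (fun n => by simpa [mem_closedBall, dist_eq_norm] using habound n)
  have ha₀ : a₀ ∈ A := hAc.mem_of_tendsto hφa (Eventually.of_forall fun n => ha (φ n))
  have hub : Tendsto (fun n => u (φ n)) atTop (𝓝 z) := hz.comp hφ.tendsto_atTop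
  have hb₀ : Tendsto (fun n => b (φ n)) atTop (𝓝 (z - a₀)) := by
    have : (fun n => b (φ n)) = fun n => u (φ n) - a (φ n) := by
      funext n; rw [← hab (φ n)]; abel
    rw [this]
    exact hub.sub hφa
  have hbz : z - a₀ ∈ B := hBc.mem_of_tendsto hb₀ (Eventually.of_forall fun n => hb (φ n))
  have : a₀ + (z - a₀) ∈ A + B := Set.add_mem_add ha₀ hbz
  simpa using this

/-- `Γ` is a `C`-convex region: a closed convex subset of `C` with `Γ + C ⊆ Γ`. -/
def IsCConvexRegion {d : ℕ} (C Γ : Set (Fin d → ℝ)) : Prop :=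
  Γ ⊆ C ∧ IsClosed Γ ∧ Convex ℝ Γ ∧ ∀ x ∈ Γ, ∀ y ∈ C, x + y ∈ Γ

/-- A `C`-convex region `Γ` is cobounded if `C \ Γ` is bounded. -/
def IsCoboundedCConvexRegion {d : ℕ} (C Γ : Set (Fin d → ℝ)) : Prop :=
  IsCConvexRegion C Γ ∧ Bornology.IsBounded (C \ Γ)

theorem stmt7 (d : ℕ) (C : Set (Fin d → ℝ))
    -- `C` is a closed convex cone with apex at the origin
    (hCclosed : IsClosed C)
    (hCconvex : Convex ℝ C)
    (hCcone : ∀ t : ℝ, 0 ≤ t → ∀ x ∈ C, t • x ∈ C)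
    (hC0 : (0 : Fin d → ℝ) ∈ C)
    -- `C` is strongly convex (contains no line through the origin)
    (hCstrong : ∀ x ∈ C, -x ∈ C → x = 0)
    -- `C` is `d`-dimensional
    (hCfull : Submodule.span ℝ C = ⊤)
    -- there is an invertible linear transformation mapping `C` into the nonnegative orthant
    (T : (Fin d → ℝ) ≃ₗ[ℝ] (Fin d → ℝ))
    (hT : ∀ x ∈ C, ∀ i : Fin d, 0 ≤ T x i)
    (A B : Set (Fin d → ℝ))
    (hA : IsCoboundedCConvexRegion C A)
    (hB : IsCoboundedCConvexRegion C B) :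
    IsCoboundedCConvexRegion C (A + B) := by
  obtain ⟨⟨hAC, hAcl, hAcv, hAabs⟩, hAbd⟩ := hA
  obtain ⟨⟨hBC, hBcl, hBcv, hBabs⟩, hBbd⟩ := hB
  refine ⟨⟨?_, ?_, ?_, ?_⟩, ?_⟩
  · -- A + B ⊆ C
    rintro x hx
    obtain ⟨a, ha, b, hb, rfl⟩ := Set.mem_add.mp hx
    exact hAC (hAabs a ha b (hBC hb))
  · -- closed
    exact add_closed_of_orthant T A B hAcl hBcl
      (fun x hx => hT x (hAC hx)) (fun x hx => hT x (hBC hx))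
  · exact hAcv.add hBcv
  · -- absorption
    rintro x hx y hy
    obtain ⟨a, ha, b, hb, rfl⟩ := Set.mem_add.mp hx
    have : (a + y) + b = a + b + y := by abel
    rw [← this]
    exact Set.add_mem_add (hAabs a ha y hy) hb
  · -- cobounded
    obtain ⟨R, hR⟩ := (hAbd.union hBbd).subset_closedBall 0
    have : C \ (A + B) ⊆ Metric.closedBall 0 (2 * R) := by
      intro x ⟨hxC, hxAB⟩
      have hhalf : (1/2 : ℝ) • x ∈ C := hCcone _ (by norm_num) x hxC
      have hsum : (1/2 : ℝ) • x + (1/2 : ℝ) • x = x := by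
        rw [← add_smul]; norm_num
      have hnot : (1/2 : ℝ) • x ∉ A ∨ (1/2 : ℝ) • x ∉ B := by
        by_contra h
        push_neg at h
        exact hxAB (hsum ▸ Set.add_mem_add h.1 h.2)
      have hmem : (1/2 : ℝ) • x ∈ (C \ A) ∪ (C \ B) := by
        rcases hnot with h | h
        · exact Or.inl ⟨hhalf, h⟩
        · exact Or.inr ⟨hhalf, h⟩
      have := hR hmem
      simp only [Metric.mem_closedBall, dist_zero_right] at this ⊢
      rw [norm_smul] at this
      norm_num at this
      linarith
    exact (Metric.isBounded_closedBall).subset this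
end

section
/- Suppose s, d ≥ 1, p is a prime, and a = binom(s−1+d, s−1). Then there exist natural numbers n_1(i), n_2(i), …, n_s(i) ∈ ℕ for 1to≤ i ≤ a such that the a vectors v_1,…,v_a ∈ ℚ^a, where v_i := ( μ_1(p^{n_1(i)},…,p^{n_s(i)}), …, μ_a(p^{n_1(i)},…,p^{n_s(i)}) ) and μ_1,…,μ_a is a fixed enumeration of all monomials of total degree d in s variables, form a ℚ-basis of ℚ^a. -/
lemma base_repr_inj (b : ℕ) : ∀ (s : ℕ) (f g : Fin s → ℕ), (∀ t, f t < b) → (∀ t, g t < b) →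
    (∑ t, f t * b ^ (t : ℕ)) = (∑ t, g t * b ^ (t : ℕ)) → f = g := by
  intro s
  induction s with
  | zero => intro f g _ _ _; funext t; exact t.elim0
  | succ m ih =>
    intro f g hf hg hsum
    rw [Fin.sum_univ_succ, Fin.sum_univ_succ] at hsum
    simp only [Fin.val_zero, pow_zero, mul_one, Fin.val_succ] at hsum
    have key : ∀ (h : Fin (m+1) → ℕ), (∑ t : Fin m, h t.succ * b ^ ((t : ℕ) + 1))
        = b * ∑ t : Fin m, h t.succ * b ^ (t : ℕ) := by
      intro h
      rw [Finset.mul_sum]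
      congr 1; funext t; ring
    rw [key f, key g] at hsum
    have hb : 0 < b := lt_of_le_of_lt (Nat.zero_le _) (hf 0)
    have h0 : f 0 = g 0 := by
      have := congrArg (· % b) hsum
      simpa [Nat.add_mul_mod_self_left, Nat.mod_eq_of_lt (hf 0), Nat.mod_eq_of_lt (hg 0)]
        using this
    have htail : (fun t : Fin m => f t.succ) = (fun t : Fin m => g t.succ) := by
      apply ih _ _ (fun t => hf t.succ) (fun t => hg t.succ)
      have : b * ∑ t : Fin m, f t.succ * b ^ (t : ℕ) = b * ∑ t : Fin m, g t.succ * b ^ (t : ℕ) := by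
        omega
      exact Nat.eq_of_mul_eq_mul_left hb this
    funext t
    rcases Fin.eq_zero_or_eq_succ t with rfl | ⟨j, rfl⟩
    · exact h0
    · exact congrFun htail j

theorem stmt8 (s d : ℕ) (hs : 1 ≤ s) (hd : 1 ≤ d)
    (p : ℕ) (hp : p.Prime)
    (a : ℕ) (ha : a = (s - 1 + d).choose (s - 1))
    -- `μ` is a fixed enumeration of the monomials of total degree `d` in `s` variables,
    -- a monomial being recorded by its exponent vector
    (μ : Fin a → (Fin s → ℕ))
    (hμdeg : ∀ k, ∑ t, μ k t = d)
    (hμinj : Function.Injective μ)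
    (hμsurj : ∀ f : Fin s → ℕ, (∑ t, f t) = d → ∃ k, μ k = f) :
    -- there exist `n t (i) = n (i) t` such that the vectors
    -- `v i = (μ k (p^{n 1 (i)}, …, p^{n s (i)}))_{k}` form a `ℚ`-basis of `ℚ^a`
    ∃ n : Fin a → (Fin s → ℕ),
      LinearIndependent ℚ
        (fun i : Fin a => (fun k : Fin a => (p : ℚ) ^ (∑ t, μ k t * n i t))) ∧
      Submodule.span ℚ
        (Set.range (fun i : Fin a => (fun k : Fin a => (p : ℚ) ^ (∑ t, μ k t * n i t)))) = ⊤ := by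
  set c : Fin a → ℕ := fun k => ∑ t, μ k t * (d + 1) ^ (t : ℕ) with hc
  refine ⟨fun i t => (i : ℕ) * (d + 1) ^ (t : ℕ), ?_⟩
  -- the exponent simplifies
  have hexp : ∀ i k : Fin a, (∑ t, μ k t * ((i : ℕ) * (d + 1) ^ (t : ℕ))) = (i : ℕ) * c k := by
    intro i k
    rw [hc, Finset.mul_sum]
    congr 1; funext t; ring
  set x : Fin a → ℚ := fun k => (p : ℚ) ^ (c k) with hx
  have hμlt : ∀ k t, μ k t < d + 1 := by
    intro k t
    have := hμdeg k
    have : μ k t ≤ d := this ▸ Finset.single_le_sum (fun t _ => Nat.zero_le (μ k t))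
      (Finset.mem_univ t)
    omega
  have hcinj : Function.Injective c := by
    intro k l h
    exact hμinj (base_repr_inj (d + 1) s (μ k) (μ l) (hμlt k) (hμlt l) h)
  have hxinj : Function.Injective x := by
    intro k l h
    apply hcinj
    apply Nat.pow_right_injective hp.two_le
    have : ((p ^ c k : ℕ) : ℚ) = ((p ^ c l : ℕ) : ℚ) := by push_cast; exact h
    exact_mod_cast this
  -- family = rows of (vandermonde x)ᵀ
  have hfam : (fun i : Fin a => (fun k : Fin a =>
      (p : ℚ) ^ (∑ t, μ k t * ((i : ℕ) * (d + 1) ^ (t : ℕ)))))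
      = fun i => (Matrix.vandermonde x).transpose i := by
    funext i k
    rw [hexp i k, mul_comm, pow_mul]
    rfl
  have hdet : (Matrix.vandermonde x).det ≠ 0 := Matrix.det_vandermonde_ne_zero_iff.mpr hxinj
  have hunit : IsUnit (Matrix.vandermonde x) := (Matrix.isUnit_iff_isUnit_det _).mpr hdet.isUnit
  have hli : LinearIndependent ℚ (fun i : Fin a => (fun k : Fin a =>
      (p : ℚ) ^ (∑ t, μ k t * ((i : ℕ) * (d + 1) ^ (t : ℕ))))) := by
    rw [hfam]
    exact Matrix.linearIndependent_cols_iff_isUnit.mpr hunit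
  refine ⟨hli, ?_⟩
  have hcard : Fintype.card (Fin a) = Module.finrank ℚ (Fin a → ℚ) := by
    simp
  haveI : Nonempty (Fin a) := by
    rw [ha]
    exact Fin.pos_iff_nonempty.mp (Nat.choose_pos (Nat.le_add_right _ _))
  have hspan := (basisOfLinearIndependentOfCardEqFinrank hli hcard).span_eq
  rwa [coe_basisOfLinearIndependentOfCardEqFinrank] at hspan
end
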